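/- arXiv:1506.08345 — 2 statements merged into one kernel-verified Lean document; each statement's English description precedes it below -/
import Mathlib

section
/- For n ≥ 3 with n ≡ 2 (mod 4), the cycle C_n has no color-blind distinguishing 2-edge-coloring, but has a color-blind distinguishing 3-edge-coloring; that is, dal(C_n) = 3. -/
open Finset

/-- The color-blind partition of `v`: the multiset of (nonzero) counts of incident
edges of each color, i.e. the partition of `deg v` with trailing zeroes removed. -/
def cbp {V : Type*} [Fintype V] [DecidableEq V] (G : SimpleGraph V) [DecidableRel G.Adj]
    {k : ℕ} (c : Sym2 V → Fin k) (v : V) : Multiset ℕ :=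
  (((Finset.univ : Finset (Fin k)).val.map fun i =>
    ((G.neighborFinset v).filter fun w => c s(v, w) = i).card).filter fun m => m ≠ 0)

/-- `c` is a color-blind distinguishing edge-coloring of `G`. -/
def IsCBD {V : Type*} [Fintype V] [DecidableEq V] (G : SimpleGraph V) [DecidableRel G.Adj]
    {k : ℕ} (c : Sym2 V → Fin k) : Prop :=
  ∀ u v : V, G.Adj u v → cbp G c u ≠ cbp G c v

/-- The cycle `C_n` on vertex set `Fin n` (for `n ≥ 3`). -/
def cycleGraph (n : ℕ) : SimpleGraph (Fin n) where
  Adj p q := p ≠ q ∧ ((p.val + 1) % n = q.val ∨ (q.val + 1) % n = p.val)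
  symm := ⟨fun p q h => ⟨h.1.symm, h.2.symm⟩⟩
  loopless := ⟨fun p h => h.1 rfl⟩

instance (n : ℕ) : DecidableRel (cycleGraph n).Adj := fun p q =>
  inferInstanceAs (Decidable (p ≠ q ∧ ((p.val + 1) % n = q.val ∨ (q.val + 1) % n = p.val)))

/-!
On a cycle every vertex has degree 2, so its color-blind partition is `{2}` or `{1, 1}` according
as its two edges have equal or different colors, and a coloring is distinguishing exactly when the
two kinds of vertices alternate around the cycle.

With two colors, let `t v` be the color of the edge `s(v, v + 1)`. Alternation forces
`t (v + 2) = t v + 1` in `Fin 2`; walking once around the cycle in steps of 2 takes `n / 2` steps,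
an odd number, so `t v = t v + 1`, which is absurd.

With three colors, group the edges into `n / 2` consecutive pairs, color both edges of a pair
alike, and color consecutive pairs differently (alternating, with a third color for the last pair).
-/

theorem cbp_of_neighborFinset_eq_pair {V : Type*} [Fintype V] [DecidableEq V] {G : SimpleGraph V}
    [DecidableRel G.Adj] {k : ℕ} (c : Sym2 V → Fin k) {v a b : V} (hab : a ≠ b)
    (hv : G.neighborFinset v = {a, b}) :
    cbp G c v = if c s(v, a) = c s(v, b) then {2} else {1, 1} := by
  have hcount (i : Fin k) : (({a, b} : Finset V).filter fun w => c s(v, w) = i).card =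
      (if c s(v, a) = i then 1 else 0) + (if c s(v, b) = i then 1 else 0) := by
    rw [filter_insert, filter_singleton]
    split_ifs <;> simp [hab]
  unfold cbp
  simp only [hv, hcount, Multiset.filter_map, ← filter_val]
  generalize c s(v, a) = x, c s(v, b) = y
  split_ifs with hxy
  · subst hxy
    rw [show univ.filter _ = {x} by ext; simp [eq_comm]]
    simp
  · rw [show univ.filter _ = {x, y} by ext i; by_cases x = i <;> simp_all [eq_comm]]
    simp [hxy, Ne.symm hxy]

section Cycle

variable {n k : ℕ}

theorem cycleGraph_adj_iff {u v : Fin (n + 2)} :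
    (cycleGraph (n + 2)).Adj u v ↔ v = u + 1 ∨ u = v + 1 := by
  have hsucc (a b : Fin (n + 2)) : (a.val + 1) % (n + 2) = b.val ↔ b = a + 1 := by
    simp [Fin.ext_iff, Fin.val_add, eq_comm]
  simp only [cycleGraph, hsucc]
  constructor
  · exact fun h => h.2
  · rintro (rfl | rfl) <;> simp

theorem cycleGraph_neighborFinset (v : Fin (n + 2)) :
    (cycleGraph (n + 2)).neighborFinset v = {v - 1, v + 1} := by
  ext w
  rw [SimpleGraph.mem_neighborFinset, cycleGraph_adj_iff, mem_insert, mem_singleton,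
    eq_sub_iff_add_eq, eq_comm (a := w + 1), or_comm]

theorem Fin.self_ne_add_one_add_one (v : Fin (n + 3)) : v ≠ v + 1 + 1 := by
  rw [Ne, add_assoc, left_eq_add]
  simp [Fin.ext_iff, Fin.val_add, Nat.mod_eq_of_lt]

theorem Fin.sub_one_ne_add_one (v : Fin (n + 3)) : v - 1 ≠ v + 1 := by
  rw [Ne, sub_eq_iff_eq_add]
  exact Fin.self_ne_add_one_add_one v

theorem cbp_cycleGraph (c : Sym2 (Fin (n + 3)) → Fin k) (v : Fin (n + 3)) :
    cbp (cycleGraph (n + 3)) c v = if c s(v - 1, v) = c s(v, v + 1) then {2} else {1, 1} := by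
  rw [cbp_of_neighborFinset_eq_pair c (Fin.sub_one_ne_add_one v) (cycleGraph_neighborFinset v),
    Sym2.eq_swap]

theorem cbp_cycleGraph_ne_add_one_iff (c : Sym2 (Fin (n + 3)) → Fin k) (v : Fin (n + 3)) :
    cbp (cycleGraph (n + 3)) c v ≠ cbp (cycleGraph (n + 3)) c (v + 1) ↔
      (c s(v - 1, v) = c s(v, v + 1) ↔ c s(v, v + 1) ≠ c s(v + 1, v + 1 + 1)) := by
  have h12 : (1 ::ₘ {1} : Multiset ℕ) ≠ {2} := by decide
  rw [cbp_cycleGraph, cbp_cycleGraph, add_sub_cancel_right]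
  split_ifs <;> simp_all [h12.symm]

theorem isCBD_cycleGraph_iff (c : Sym2 (Fin (n + 3)) → Fin k) :
    IsCBD (cycleGraph (n + 3)) c ↔
      ∀ v, (c s(v - 1, v) = c s(v, v + 1) ↔ c s(v, v + 1) ≠ c s(v + 1, v + 1 + 1)) := by
  simp only [← cbp_cycleGraph_ne_add_one_iff]
  constructor
  · exact fun h v => h v (v + 1) (cycleGraph_adj_iff.2 (Or.inl rfl))
  · intro h u v huv
    rcases cycleGraph_adj_iff.1 huv with rfl | rfl
    · exact h u
    · exact (h v).symm

theorem exists_sym2_apply_mk_add_one {α : Type*} (t : Fin (n + 3) → α) :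
    ∃ c : Sym2 (Fin (n + 3)) → α, ∀ v, c s(v, v + 1) = t v := by
  refine ⟨Sym2.lift ⟨fun u v => if v = u + 1 then t u else if u = v + 1 then t v else t 0, ?_⟩,
    fun v => by simp⟩
  intro u v
  by_cases h : v = u + 1
  · subst h; simp [Fin.self_ne_add_one_add_one]
  · by_cases h' : u = v + 1
    · subst h'; simp [Fin.self_ne_add_one_add_one]
    · simp [h, h']

end Cycle

theorem apply_add_nsmul_of_apply_add {M G : Type*} [AddMonoid M] [AddMonoid G] {t : M → G}
    {d : M} {a : G} (h : ∀ x, t (x + d) = t x + a) (x : M) (j : ℕ) :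
    t (x + j • d) = t x + j • a := by
  induction j with
  | zero => simp
  | succ j ih => rw [succ_nsmul, succ_nsmul, ← add_assoc, h, ih, add_assoc]

theorem not_isCBD_cycleGraph_fin_two {n : ℕ} (hn : (n + 3) % 4 = 2)
    (c : Sym2 (Fin (n + 3)) → Fin 2) : ¬ IsCBD (cycleGraph (n + 3)) c := by
  rw [isCBD_cycleGraph_iff]
  intro hc
  set t : Fin (n + 3) → Fin 2 := fun v => c s(v, v + 1)
  have hstep (v : Fin (n + 3)) : t (v + (1 + 1)) = t v + 1 := by
    have hflip : ∀ x y z : Fin 2, (x = y ↔ y ≠ z) → z = x + 1 := by decide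
    have hv := hc (v + 1)
    rw [add_sub_cancel_right] at hv
    rw [← add_assoc]
    exact hflip _ _ _ hv
  obtain ⟨l, hl⟩ : ∃ l, n + 3 = 2 * (2 * l + 1) := ⟨(n + 3) / 4, by omega⟩
  have hcycle : (2 * l + 1) • (1 + 1 : Fin (n + 3)) = 0 := by
    rw [← two_nsmul, ← mul_nsmul', mul_comm, ← hl]
    simpa using card_nsmul_eq_zero (G := Fin (n + 3)) (x := 1)
  have hodd : (2 * l + 1) • (1 : Fin 2) ≠ 0 := by
    rw [succ_nsmul, mul_comm, mul_nsmul', two_nsmul, show (1 + 1 : Fin 2) = 0 from rfl]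
    simp
  have hloop := apply_add_nsmul_of_apply_add hstep 0 (2 * l + 1)
  rw [hcycle, add_zero, left_eq_add] at hloop
  exact hodd hloop

-- The edge `s(i, i + 1)` belongs to the pair `i / 2`.
def blockColor (N i : ℕ) : Fin 3 :=
  if N ≤ i + 2 then 2 else if Even (i / 2) then 0 else 1

theorem blockColor_sub_one_eq_iff {N i : ℕ} (hN : Even N) (hi₀ : i ≠ 0) (hi : i < N) :
    blockColor N (i - 1) = blockColor N i ↔ Odd i := by
  rw [Nat.even_iff] at hN
  simp only [blockColor, Nat.even_iff, Nat.odd_iff]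
  split_ifs <;> simp <;> omega

theorem blockColor_fin_sub_one_eq_iff {n : ℕ} (hn : Even (n + 3)) (v : Fin (n + 3)) :
    blockColor (n + 3) (v - 1).val = blockColor (n + 3) v.val ↔ Odd v.val := by
  rw [Fin.coe_sub_one]
  split_ifs with hv
  · subst hv
    simp [blockColor]
  · exact blockColor_sub_one_eq_iff hn (Fin.val_ne_zero_iff.2 hv) v.isLt

theorem exists_isCBD_cycleGraph_fin_three {n : ℕ} (hn : Even (n + 3)) :
    ∃ c : Sym2 (Fin (n + 3)) → Fin 3, IsCBD (cycleGraph (n + 3)) c := by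
  obtain ⟨c, hc⟩ := exists_sym2_apply_mk_add_one fun v : Fin (n + 3) => blockColor (n + 3) v.val
  refine ⟨c, (isCBD_cycleGraph_iff c).2 fun v => ?_⟩
  have hpred := hc (v - 1)
  rw [sub_add_cancel] at hpred
  have hsucc := blockColor_fin_sub_one_eq_iff hn (v + 1)
  rw [add_sub_cancel_right] at hsucc
  rw [hpred, hc, hc, blockColor_fin_sub_one_eq_iff hn, Ne, hsucc, Fin.val_add_one]
  split_ifs with hv
  · subst hv
    simpa [Nat.even_add_one, Nat.odd_add_one] using hn
  · simp [Nat.odd_add_one]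

theorem cycle_two_mod_four_dal_eq_three (n : ℕ) (h3 : 3 ≤ n) (h4 : n % 4 = 2) :
    (¬ ∃ c : Sym2 (Fin n) → Fin 2, IsCBD (cycleGraph n) c) ∧
    (∃ c : Sym2 (Fin n) → Fin 3, IsCBD (cycleGraph n) c) := by
  obtain ⟨m, rfl⟩ : ∃ m, n = m + 3 := ⟨n - 3, by omega⟩
  exact ⟨fun ⟨c, hc⟩ => not_isCBD_cycleGraph_fin_two h4 c hc,
    exists_isCBD_cycleGraph_fin_three (Nat.even_iff.2 (by omega))⟩
end

section
/- Let v1 v2 … vt be a path (t ≥ 2) in a graph G where every vi has degree d ≥ 4, each internal vi having d-2 pendant (or off-path) neighbors. Suppose all d edges incident to v1 are colored with colors from {1,…,k} (k ∈ {2,3}), and one edge incident to vt other than v_{t-1}vt is colored. Then the coloring extends to all remaining edges incident to v2,…,vt using only colors 1 and 2, so that c*(vi) ≠ c*(v_{i+1}) for all 1 ≤ i ≤ t-1. -/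
open Finset

lemma pairs_lemma (f a₀ a₁ : ℕ) (hf : 2 ≤ f)
    (h : Multiset.filter (fun m => m ≠ 0) {f - 0 + a₀, 0 + a₁}
       = Multiset.filter (fun m => m ≠ 0) {f - 1 + a₀, 1 + a₁}) :
    Multiset.filter (fun m => m ≠ 0) {f - 0 + a₀, 0 + a₁}
      ≠ Multiset.filter (fun m => m ≠ 0) {f - f + a₀, f + a₁} := by
  have h1 := congrArg (Multiset.count (f + a₀)) h
  simp only [Multiset.count_filter, Multiset.insert_eq_cons, Multiset.count_cons,
    Multiset.count_singleton] at h1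
  intro h2
  have h3 := congrArg (Multiset.count (f + a₀)) h2
  simp only [Multiset.count_filter, Multiset.insert_eq_cons, Multiset.count_cons,
    Multiset.count_singleton] at h3
  split_ifs at h1 h3 <;> omega

lemma key_lemma (f a₀ a₁ : ℕ) (hf : 2 ≤ f) (R T : Multiset ℕ) :
    ∃ j, (j = 0 ∨ j = 1 ∨ j = f) ∧
      Multiset.filter (fun m => m ≠ 0) ((f - j + a₀) ::ₘ (j + a₁) ::ₘ R) ≠ T := by
  have hsplit : ∀ j : ℕ, Multiset.filter (fun m => m ≠ 0) ((f - j + a₀) ::ₘ (j + a₁) ::ₘ R)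
      = Multiset.filter (fun m => m ≠ 0) ({f - j + a₀, j + a₁} : Multiset ℕ)
        + Multiset.filter (fun m => m ≠ 0) R := by
    intro j
    simp only [Multiset.insert_eq_cons, Multiset.filter_cons, Multiset.filter_singleton,
      Multiset.filter_zero]
    split_ifs <;> simp [Multiset.cons_swap]
  by_cases h0 : Multiset.filter (fun m => m ≠ 0) ((f - 0 + a₀) ::ₘ (0 + a₁) ::ₘ R) ≠ T
  · exact ⟨0, Or.inl rfl, h0⟩
  by_cases h1 : Multiset.filter (fun m => m ≠ 0) ((f - 1 + a₀) ::ₘ (1 + a₁) ::ₘ R) ≠ T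
  · exact ⟨1, Or.inr (Or.inl rfl), h1⟩
  push_neg at h0 h1
  refine ⟨f, Or.inr (Or.inr rfl), ?_⟩
  have heq : Multiset.filter (fun m => m ≠ 0) ({f - 0 + a₀, 0 + a₁} : Multiset ℕ)
      = Multiset.filter (fun m => m ≠ 0) ({f - 1 + a₀, 1 + a₁} : Multiset ℕ) := by
    have := h0.trans h1.symm
    rw [hsplit 0, hsplit 1] at this
    exact add_right_cancel this
  have hne := pairs_lemma f a₀ a₁ hf heq
  intro hT
  apply hne
  have := h0.trans hT.symm
  rw [hsplit 0, hsplit f] at this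
  exact add_right_cancel this

lemma cbp_congr {V : Type*} [Fintype V] [DecidableEq V] (G : SimpleGraph V) [DecidableRel G.Adj]
    {k : ℕ} (c₁ c₂ : Sym2 V → Fin k) (x : V)
    (h : ∀ w, G.Adj x w → c₁ s(x, w) = c₂ s(x, w)) : cbp G c₁ x = cbp G c₂ x := by
  unfold cbp
  congr 1
  apply Multiset.map_congr rfl
  intro i _
  congr 1
  apply Finset.filter_congr
  intro w hw
  rw [SimpleGraph.mem_neighborFinset] at hw
  simp [h w hw]

lemma step_lemma {V : Type*} [Fintype V] [DecidableEq V] (G : SimpleGraph V)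
    [DecidableRel G.Adj] {k : ℕ} (hk : k = 2 ∨ k = 3) (d : ℕ) (hd : 4 ≤ d) (u p w0 : V)
    (hup : G.Adj u p) (huw0 : G.Adj u w0) (hpw : p ≠ w0) (hdu : G.degree u = d)
    (c₀ : Sym2 V → Fin k) (T : Multiset ℕ) :
    ∃ c'' : Sym2 V → Fin k,
      (∀ e : Sym2 V, (∀ w ∈ G.neighborFinset u \ {p, w0}, e ≠ s(u, w)) → c'' e = c₀ e) ∧
      (∀ w ∈ G.neighborFinset u \ {p, w0}, (c'' s(u, w)).val < 2) ∧
      cbp G c'' u ≠ T := by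
  have hk2 : 2 ≤ k := by rcases hk with rfl | rfl <;> omega
  classical
  set S : Finset V := G.neighborFinset u \ {p, w0} with hSdef
  have hsub : ({p, w0} : Finset V) ⊆ G.neighborFinset u := by
    intro x hx
    rw [Finset.mem_insert, Finset.mem_singleton] at hx
    rw [SimpleGraph.mem_neighborFinset]
    rcases hx with rfl | rfl
    · exact hup
    · exact huw0
  have hdeg' : (G.neighborFinset u).card = d := hdu
  have hScard : S.card = d - 2 := by
    rw [hSdef, Finset.card_sdiff_of_subset hsub, hdeg', Finset.card_pair hpw]
  have hf2 : 2 ≤ S.card := by omega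
  obtain ⟨w₁, hw₁⟩ : S.Nonempty := Finset.card_pos.mp (by omega)
  have hSnu : ∀ w ∈ S, w ≠ u := by
    intro w hw
    have := (Finset.mem_sdiff.mp hw).1
    rw [SimpleGraph.mem_neighborFinset] at this
    exact fun h => G.irrefl (h ▸ this)
  have hSnpw : ∀ w ∈ S, w ≠ p ∧ w ≠ w0 := by
    intro w hw
    have := (Finset.mem_sdiff.mp hw).2
    simp at this
    exact this
  let o0 : Fin k := ⟨0, by omega⟩
  let o1 : Fin k := ⟨1, by omega⟩
  have ho01 : o0 ≠ o1 := by
    intro h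
    have := congrArg Fin.val h
    simp only [o0, o1] at this
    omega
  -- the candidate colorings
  let cc : Finset V → Sym2 V → Fin k := fun S₁ e =>
    if ∃ w ∈ S, e = s(u, w) then (if ∃ w ∈ S₁, e = s(u, w) then o1 else o0) else c₀ e
  have hcc_mem : ∀ S₁ ⊆ S, ∀ w ∈ S, cc S₁ s(u, w) = if w ∈ S₁ then o1 else o0 := by
    intro S₁ hS₁ w hw
    have hout : ∃ w' ∈ S, s(u, w) = s(u, w') := ⟨w, hw, rfl⟩
    simp only [cc, if_pos hout]
    congr 1
    simp only [eq_iff_iff]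
    constructor
    · rintro ⟨w', hw', he⟩
      rwa [Sym2.congr_right.mp he]
    · intro h; exact ⟨w, h, rfl⟩
  have hcc_out : ∀ S₁, ∀ e : Sym2 V, (∀ w ∈ S, e ≠ s(u, w)) → cc S₁ e = c₀ e := by
    intro S₁ e he
    have : ¬ ∃ w ∈ S, e = s(u, w) := by
      rintro ⟨w, hw, rfl⟩
      exact he w hw rfl
    simp only [cc, if_neg this]
  -- count computation
  have hcount : ∀ S₁ ⊆ S, ∀ i : Fin k,
      ((G.neighborFinset u).filter fun w => cc S₁ s(u, w) = i).card
        = (if i = o0 then S.card - S₁.card else if i = o1 then S₁.card else 0)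
          + (({p, w0} : Finset V).filter fun w => c₀ s(u, w) = i).card := by
    intro S₁ hS₁ i
    have hunion : G.neighborFinset u = S ∪ ({p, w0} : Finset V) := by
      rw [hSdef, Finset.sdiff_union_of_subset hsub]
    have hdisj : Disjoint S ({p, w0} : Finset V) := Finset.sdiff_disjoint
    rw [hunion, Finset.filter_union, Finset.card_union_of_disjoint
      (Finset.disjoint_filter_filter hdisj)]
    congr 1
    · -- S part
      rw [Finset.filter_congr (fun w hw => by rw [hcc_mem S₁ hS₁ w hw])]
      by_cases h0 : i = o0
      · subst h0
        rw [if_pos rfl]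
        have : (S.filter fun w => (if w ∈ S₁ then o1 else o0) = o0) = S \ S₁ := by
          ext w
          simp only [Finset.mem_filter, Finset.mem_sdiff]
          constructor
          · rintro ⟨hw, hcond⟩
            refine ⟨hw, fun hmem => ?_⟩
            rw [if_pos hmem] at hcond
            exact ho01 hcond.symm
          · rintro ⟨hw, hnm⟩
            exact ⟨hw, by rw [if_neg hnm]⟩
        rw [this, Finset.card_sdiff_of_subset hS₁]
      · rw [if_neg h0]
        by_cases h1 : i = o1
        · subst h1
          rw [if_pos rfl]
          have : (S.filter fun w => (if w ∈ S₁ then o1 else o0) = o1) = S₁ := by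
            ext w
            simp only [Finset.mem_filter]
            constructor
            · rintro ⟨hw, hcond⟩
              by_contra hnm
              rw [if_neg hnm] at hcond
              exact ho01 hcond
            · intro hm
              exact ⟨hS₁ hm, by rw [if_pos hm]⟩
          rw [this]
        · rw [if_neg h1]
          have : (S.filter fun w => (if w ∈ S₁ then o1 else o0) = i) = ∅ := by
            ext w
            simp only [Finset.mem_filter, Finset.notMem_empty, iff_false]
            rintro ⟨hw, hcond⟩
            by_cases hm : w ∈ S₁
            · rw [if_pos hm] at hcond; exact h1 hcond.symm
            · rw [if_neg hm] at hcond; exact h0 hcond.symm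
          rw [this, Finset.card_empty]
    · -- {p, w0} part
      apply congrArg Finset.card
      apply Finset.filter_congr
      intro w hw
      have hwS : w ∉ S := Finset.disjoint_right.mp hdisj hw
      rw [hcc_out S₁ s(u, w) (fun w' hw' he => hwS ((Sym2.congr_right.mp he) ▸ hw'))]
  -- split universe of colors
  set A : Fin k → ℕ := fun i => (({p, w0} : Finset V).filter fun w => c₀ s(u, w) = i).card
    with hA
  set rest : Multiset (Fin k) := (((Finset.univ : Finset (Fin k)).val.erase o0).erase o1)
    with hrest
  have ho1mem : o1 ∈ ((Finset.univ : Finset (Fin k)).val.erase o0) :=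
    Multiset.mem_erase_of_ne (Ne.symm ho01) |>.mpr (Finset.mem_univ o1)
  have huniv : (Finset.univ : Finset (Fin k)).val = o0 ::ₘ o1 ::ₘ rest := by
    rw [hrest, Multiset.cons_erase ho1mem, Multiset.cons_erase (Finset.mem_val.mpr (Finset.mem_univ o0))]
  have hrest0 : o0 ∉ rest := by
    intro h
    exact (Multiset.Nodup.notMem_erase (Finset.univ.nodup))
      (Multiset.mem_of_mem_erase h)
  have hrest1 : o1 ∉ rest := by
    rw [hrest]
    intro h
    exact Multiset.Nodup.notMem_erase ((Finset.univ.nodup).erase o0) h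
  set R : Multiset ℕ := rest.map A with hR
  have hcbp : ∀ S₁ ⊆ S, cbp G (cc S₁) u
      = Multiset.filter (fun m => m ≠ 0)
        ((S.card - S₁.card + A o0) ::ₘ (S₁.card + A o1) ::ₘ R) := by
    intro S₁ hS₁
    unfold cbp
    rw [huniv]
    simp only [Multiset.map_cons]
    rw [hcount S₁ hS₁ o0, if_pos rfl, hcount S₁ hS₁ o1, if_neg (Ne.symm ho01), if_pos rfl]
    have hmap : Multiset.map
        (fun i => #(filter (fun w => cc S₁ s(u, w) = i) (G.neighborFinset u))) rest = R := by
      rw [hR]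
      apply Multiset.map_congr rfl
      intro i hi
      rw [hcount S₁ hS₁ i, if_neg (fun h : i = o0 => hrest0 (h ▸ hi)),
        if_neg (fun h : i = o1 => hrest1 (h ▸ hi)), zero_add]
    rw [hmap]
  obtain ⟨j, hj, hne⟩ := key_lemma S.card (A o0) (A o1) hf2 R T
  have hpick : ∃ S₁, S₁ ⊆ S ∧ S₁.card = j := by
    rcases hj with rfl | rfl | rfl
    · exact ⟨∅, Finset.empty_subset S, Finset.card_empty⟩
    · exact ⟨{w₁}, Finset.singleton_subset_iff.mpr hw₁, Finset.card_singleton w₁⟩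
    · exact ⟨S, Finset.Subset.refl S, rfl⟩
  obtain ⟨S₁, hS₁, hcard⟩ := hpick
  refine ⟨cc S₁, hcc_out S₁, ?_, ?_⟩
  · intro w hw
    rw [hcc_mem S₁ hS₁ w hw]
    split_ifs
    · exact Nat.lt_of_lt_of_le Nat.one_lt_two (le_refl 2)
    · exact Nat.zero_lt_two
  · rw [hcbp S₁ hS₁, hcard]
    exact hne

lemma aux_main {V : Type*} [Fintype V] [DecidableEq V] (G : SimpleGraph V)
    [DecidableRel G.Adj] (d : ℕ) (hd : 4 ≤ d) {k : ℕ} (hk : k = 2 ∨ k = 3) :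
    ∀ t : ℕ, 2 ≤ t → ∀ v : ℕ → V,
    (∀ i j, i < t → j < t → v i = v j → i = j) →
    (∀ i, i + 1 < t → G.Adj (v i) (v (i + 1))) →
    (∀ i < t, G.degree (v i) = d) →
    (∀ i < t, ∀ w, G.Adj (v i) w →
      (∀ j < t, w ≠ v j) ∨ (∃ j < t, w = v j ∧ (j + 1 = i ∨ i + 1 = j))) →
    ∀ w0 : V, G.Adj (v (t - 1)) w0 → w0 ≠ v (t - 2) →
    ∀ c : Sym2 V → Fin k,
    ∃ c' : Sym2 V → Fin k,
      (∀ e, v 0 ∈ e → c' e = c e) ∧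
      c' s(v (t - 1), w0) = c s(v (t - 1), w0) ∧
      (∀ i, 0 < i → i < t → ∀ w, G.Adj (v i) w → w ≠ v 0 →
        s(v i, w) ≠ s(v (t - 1), w0) → (c' s(v i, w)).val < 2) ∧
      (∀ i, i + 1 < t → cbp G c' (v i) ≠ cbp G c' (v (i + 1))) := by
  intro t ht
  induction t, ht using Nat.le_induction with
  | base =>
    intro v hinj hadj hdeg hoff w0 hw0 hw0ne c
    have e1 : (2 : ℕ) - 1 = 1 := rfl
    have e2 : (2 : ℕ) - 2 = 0 := rfl
    rw [e1] at hw0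
    rw [e2] at hw0ne
    have h01 : v 0 ≠ v 1 := fun h => by have := hinj 0 1 (by omega) (by omega) h; omega
    have hpw : v 0 ≠ w0 := fun h => hw0ne (h.symm)
    obtain ⟨c'', h1, h2, h3⟩ := step_lemma G hk d hd (v 1) (v 0) w0
      ((hadj 0 (by omega)).symm) hw0 hpw (hdeg 1 (by omega)) c (cbp G c (v 0))
    set S : Finset V := G.neighborFinset (v 1) \ {v 0, w0} with hS
    have hSmem : ∀ w ∈ S, w ≠ v 0 ∧ w ≠ w0 := by
      intro w hw
      have := (Finset.mem_sdiff.mp hw).2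
      simp at this
      exact this
    have hgood : ∀ e : Sym2 V, v 0 ∈ e → ∀ w ∈ S, e ≠ s(v 1, w) := by
      intro e he w hw hew
      rw [hew, Sym2.mem_iff] at he
      rcases he with h | h
      · exact h01 h
      · exact (hSmem w hw).1 h.symm
    have hv0edge : ∀ y, G.Adj (v 0) y → ∀ w ∈ S, s(v 0, y) ≠ s(v 1, w) := by
      intro y _ w hw hew
      rw [Sym2.eq_iff] at hew
      rcases hew with ⟨ha, _⟩ | ⟨ha, _⟩
      · exact h01 ha
      · exact (hSmem w hw).1 ha.symm
    refine ⟨c'', ?_, ?_, ?_, ?_⟩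
    · intro e he
      exact h1 e (hgood e he)
    · rw [e1]
      apply h1
      intro w hw hew
      exact (hSmem w hw).2 ((Sym2.congr_right.mp hew).symm)
    · intro i hi0 hi2 w hadjw hwv0 hedge
      have hi : i = 1 := by omega
      subst hi
      rw [e1] at hedge
      have hww0 : w ≠ w0 := fun h => hedge (by rw [h])
      have hwS : w ∈ S := by
        rw [hS, Finset.mem_sdiff, SimpleGraph.mem_neighborFinset]
        refine ⟨hadjw, ?_⟩
        simp [hwv0, hww0]
      exact h2 w hwS
    · intro i hi
      have hi : i = 0 := by omega
      subst hi
      have hcbp0 : cbp G c'' (v 0) = cbp G c (v 0) := by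
        apply cbp_congr
        intro y hy
        exact h1 s(v 0, y) (hv0edge y hy)
      rw [hcbp0]
      exact fun h => h3 h.symm
  | succ t ht IH =>
    intro v hinj hadj hdeg hoff w0 hw0 hw0ne c
    have e1 : t + 1 - 1 = t := rfl
    have e2 : t + 1 - 2 = t - 1 := rfl
    rw [e1] at hw0
    rw [e2] at hw0ne
    have htm1 : t - 1 + 1 = t := by omega
    have hvinj : ∀ i j, i < t + 1 → j < t + 1 → i ≠ j → v i ≠ v j := by
      intro i j hi hj hne h
      exact hne (hinj i j hi hj h)
    -- w0 is off-path
    have hoffw0 : ∀ j < t + 1, w0 ≠ v j := by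
      rcases hoff t (by omega) w0 hw0 with h | ⟨j, hj, rfl, hj2⟩
      · exact h
      · exfalso
        rcases hj2 with h | h
        · have : j = t - 1 := by omega
          exact hw0ne (by rw [this])
        · omega
    have o0k : Fin k := ⟨0, by rcases hk with rfl | rfl <;> omega⟩
    set ct : Sym2 V → Fin k := fun e => if e = s(v (t - 1), v t) then ⟨0, by rcases hk with rfl | rfl <;> omega⟩ else c e with hct
    -- apply IH to the shorter path with pinned edge s(v (t-1), v t)
    obtain ⟨c₁, P1, P2, P3, P4⟩ := IH v
      (fun i j hi hj h => hinj i j (by omega) (by omega) h)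
      (fun i hi => hadj i (by omega))
      (fun i hi => hdeg i (by omega))
      (by
        intro i hi w hw
        rcases hoff i (by omega) w hw with h | ⟨j, hj, rfl, hj2⟩
        · exact Or.inl (fun j hj => h j (by omega))
        · by_cases hjt : j < t
          · exact Or.inr ⟨j, hjt, rfl, hj2⟩
          · have hjeq : j = t := by omega
            left
            intro j' hj'
            rw [hjeq]
            exact hvinj t j' (by omega) (by omega) (by omega)
      )
      (v t) (by have h := hadj (t - 1) (by omega); rwa [htm1] at h)
      (hvinj t (t - 2) (by omega) (by omega) (by omega))
      ct
    -- restore the pinned edge color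
    set c₂ : Sym2 V → Fin k := fun e => if e = s(v t, w0) then c e else c₁ e with hc₂
    have hpinnedne : s(v (t - 1), v t) ≠ s(v t, w0) := by
      intro hcon
      rw [Sym2.eq_iff] at hcon
      rcases hcon with ⟨h, -⟩ | ⟨h, -⟩
      · exact hvinj (t - 1) t (by omega) (by omega) (by omega) h
      · exact hoffw0 (t - 1) (by omega) h.symm
    have hQ1 : ∀ e, v 0 ∈ e → c₂ e = c e := by
      intro e he
      rw [hc₂]
      by_cases h : e = s(v t, w0)
      · simp [h]
      · simp only [if_neg h]
        rw [P1 e he, hct]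
        have : e ≠ s(v (t - 1), v t) := by
          intro hcon
          rw [hcon, Sym2.mem_iff] at he
          rcases he with h' | h'
          · exact hvinj 0 (t - 1) (by omega) (by omega) (by omega) h'
          · exact hvinj 0 t (by omega) (by omega) (by omega) h'
        simp [if_neg this]
    have hctval : ct s(v (t - 1), v t) = (⟨0, by rcases hk with rfl | rfl <;> omega⟩ : Fin k) := by
      simp only [hct]
      split_ifs with h
      · rfl
      · exact absurd trivial h
    have hQ2' : c₂ s(v (t - 1), v t) = ⟨0, by rcases hk with rfl | rfl <;> omega⟩ := by
      simp only [hc₂]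
      rw [if_neg hpinnedne]
      exact P2.trans hctval
    -- apply the step lemma at v t
    obtain ⟨c₃, h1, h2, h3⟩ := step_lemma G hk d hd (v t) (v (t - 1)) w0
      (by have h := hadj (t - 1) (by omega); rw [htm1] at h; exact h.symm)
      hw0 (fun h => hoffw0 (t - 1) (by omega) h.symm) (hdeg t (by omega)) c₂
      (cbp G c₂ (v (t - 1)))
    set St : Finset V := G.neighborFinset (v t) \ {v (t - 1), w0} with hSt
    have hStmem : ∀ w ∈ St, w ≠ v (t - 1) ∧ w ≠ w0 := by
      intro w hw
      have := (Finset.mem_sdiff.mp hw).2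
      simp at this
      exact this
    have hStoff : ∀ w ∈ St, ∀ j < t + 1, w ≠ v j := by
      intro w hw
      have hadjw : G.Adj (v t) w := by
        have := (Finset.mem_sdiff.mp hw).1
        rwa [SimpleGraph.mem_neighborFinset] at this
      rcases hoff t (by omega) w hadjw with h | ⟨j, hj, rfl, hj2⟩
      · exact h
      · exfalso
        rcases hj2 with h | h
        · exact (hStmem _ hw).1 (congrArg v (by omega : j = t - 1))
        · omega
    have hSedge : ∀ x, (∃ jx, jx < t ∧ x = v jx) → ∀ y, ∀ w ∈ St, s(x, y) ≠ s(v t, w) := by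
      rintro x ⟨jx, hjx, rfl⟩ y w hw hew
      rw [Sym2.eq_iff] at hew
      rcases hew with ⟨ha, -⟩ | ⟨ha, -⟩
      · exact hvinj jx t (by omega) (by omega) (by omega) ha
      · exact hStoff w hw jx (by omega) ha.symm
    -- c₃ agrees with c₂ on all edges incident to v j, j < t
    have hc₃₂ : ∀ j < t, ∀ y, G.Adj (v j) y → c₃ s(v j, y) = c₂ s(v j, y) := by
      intro j hj y hy
      exact h1 _ (hSedge (v j) ⟨j, hj, rfl⟩ y)
    have hcbp₃₂ : ∀ j < t, cbp G c₃ (v j) = cbp G c₂ (v j) := by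
      intro j hj
      exact cbp_congr G c₃ c₂ (v j) (fun y hy => hc₃₂ j hj y hy)
    -- and c₂ agrees with c₁ on edges incident to v j, j < t, except the short pinned edge
    have hc₂₁ : ∀ j < t, ∀ y, G.Adj (v j) y → c₂ s(v j, y) = c₁ s(v j, y) := by
      intro j hj y hy
      simp only [hc₂]
      have : s(v j, y) ≠ s(v t, w0) := by
        intro hcon
        rw [Sym2.eq_iff] at hcon
        rcases hcon with ⟨ha, -⟩ | ⟨ha, -⟩
        · exact hvinj j t (by omega) (by omega) (by omega) ha
        · exact hoffw0 j (by omega) ha.symm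
      rw [if_neg this]
    refine ⟨c₃, ?_, ?_, ?_, ?_⟩
    · -- edges at v 0
      intro e he
      have : ∀ w ∈ St, e ≠ s(v t, w) := by
        intro w hw hew
        rw [hew, Sym2.mem_iff] at he
        rcases he with h' | h'
        · exact hvinj 0 t (by omega) (by omega) (by omega) h'
        · exact hStoff w hw 0 (by omega) h'.symm
      rw [h1 e this]
      exact hQ1 e he
    · -- pinned edge
      rw [e1]
      have : ∀ w ∈ St, s(v t, w0) ≠ s(v t, w) := by
        intro w hw hew
        exact (hStmem w hw).2 (Sym2.congr_right.mp hew).symm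
      rw [h1 _ this, hc₂]
      simp
    · -- internal edges get colors < 2
      intro i hi0 hi w hadjw hwv0 hedge
      rw [e1] at hedge
      by_cases hit : i = t
      · rw [hit] at hadjw hedge ⊢
        by_cases hwp : w = v (t - 1)
        · subst hwp
          have : ∀ w' ∈ St, s(v t, v (t - 1)) ≠ s(v t, w') := by
            intro w' hw' hew
            exact (hStmem w' hw').1 (Sym2.congr_right.mp hew).symm
          rw [h1 _ this]
          have heqs : s(v t, v (t - 1)) = s(v (t - 1), v t) := Sym2.eq_swap
          rw [heqs, hQ2']
          exact Nat.zero_lt_two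
        · have hww0 : w ≠ w0 := fun h => hedge (by rw [h])
          have hwSt : w ∈ St := by
            rw [hSt, Finset.mem_sdiff, SimpleGraph.mem_neighborFinset]
            refine ⟨hadjw, ?_⟩
            simp [hwp, hww0]
          exact h2 w hwSt
      · have hit' : i < t := by omega
        rw [hc₃₂ i hit' w hadjw, hc₂₁ i hit' w hadjw]
        by_cases hsp : s(v i, w) = s(v (t - 1), v t)
        · have hval := P2.trans hctval
          rw [hsp, hval]
          exact Nat.zero_lt_two
        · exact P3 i hi0 hit' w hadjw hwv0 hsp
    · -- consecutive cbp's differ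
      intro i hi
      by_cases hit : i + 1 = t
      · have hieq : i = t - 1 := by omega
        subst hieq
        rw [htm1]
        have : cbp G c₃ (v (t - 1)) = cbp G c₂ (v (t - 1)) := hcbp₃₂ (t - 1) (by omega)
        rw [this]
        exact fun h => h3 h.symm
      · have hi' : i + 1 < t := by omega
        have hcbpi : ∀ j, j < t → cbp G c₃ (v j) = cbp G c₁ (v j) := by
          intro j hj
          rw [hcbp₃₂ j hj]
          exact cbp_congr G c₂ c₁ (v j) (fun y hy => hc₂₁ j hj y hy)
        rw [hcbpi i (by omega), hcbpi (i + 1) hi']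
        exact P4 i hi'

theorem high_degree_path_extension {V : Type*} [Fintype V] [DecidableEq V]
    (G : SimpleGraph V) [DecidableRel G.Adj] (t d : ℕ) (ht : 2 ≤ t) (hd : 4 ≤ d)
    (v : ℕ → V)
    (hinj : ∀ i j, i < t → j < t → v i = v j → i = j)
    (hadj : ∀ i, i + 1 < t → G.Adj (v i) (v (i + 1)))
    (hdeg : ∀ i < t, G.degree (v i) = d)
    (hoff : ∀ i < t, ∀ w, G.Adj (v i) w →
      (∀ j < t, w ≠ v j) ∨ (∃ j < t, w = v j ∧ (j + 1 = i ∨ i + 1 = j)))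
    (w0 : V) (hw0 : G.Adj (v (t - 1)) w0) (hw0ne : w0 ≠ v (t - 2))
    (k : ℕ) (hk : k = 2 ∨ k = 3) (c : Sym2 V → Fin k) :
    ∃ c' : Sym2 V → Fin k,
      (∀ e, v 0 ∈ e → c' e = c e) ∧
      c' s(v (t - 1), w0) = c s(v (t - 1), w0) ∧
      (∀ i, 0 < i → i < t → ∀ w, G.Adj (v i) w → w ≠ v 0 →
        s(v i, w) ≠ s(v (t - 1), w0) → (c' s(v i, w)).val < 2) ∧
      (∀ i, i + 1 < t → cbp G c' (v i) ≠ cbp G c' (v (i + 1))) :=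
  aux_main G d hd hk t ht v hinj hadj hdeg hoff w0 hw0 hw0ne c
end
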